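/- arXiv:2004.07356 — 4 statements merged into one kernel-verified Lean document; each statement's English description precedes it below -/
import Mathlib

section
/- Let $Z_1, Z_2, Z_3$ be mutually independent standard normal random variables, let $c, c' \in \mathbb{R}$ be constants, and define $Q(w) = P(\sqrt{w}\, Z_1 + \sqrt{1-w}\, Z_2 > c \mid Z_1 \le Z_3 + c')$ for $w \in (0,1)$. Then $Q$ is a monotonically decreasing function of $w$ on $(0,1)$. -/
open MeasureTheory ProbabilityTheory Set
open scoped NNReal

/-!
Conditioning on `Z₁ = x`, the joint probability `P(√w Z₁ + √(1-w) Z₂ > c, Z₁ ≤ Z₃ + c')` is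
`∫ g_w h dγ` with `g_w(x) = P(√w x + √(1-w) Z > c)` and the antitone weight `h(x) = P(Z ≥ x - c')`.
Since `√w Z₁ + √(1-w) Z₂` is again standard normal, `∫ g_w dγ` does not depend on `w`, and for
`w₁ < w₂` the difference `g_{w₂} - g_{w₁}` changes sign exactly once, from `≤ 0` to `≥ 0`.
A mean-zero function with such a sign change has nonpositive integral against an antitone weight.
-/

lemma integral_mul_antitone_nonpos {α : Type*} [LinearOrder α] [MeasurableSpace α]
    {ρ : Measure α} {d h : α → ℝ} (hd : Integrable d ρ)
    (hdh : Integrable (fun x => d x * h x) ρ) (hd_zero : ∫ x, d x ∂ρ = 0) (hh : Antitone h)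
    {x₀ : α} (hneg : ∀ x ≤ x₀, d x ≤ 0) (hpos : ∀ x, x₀ ≤ x → 0 ≤ d x) :
    ∫ x, d x * h x ∂ρ ≤ 0 := by
  have hpt : ∀ x, d x * (h x - h x₀) ≤ 0 := by
    intro x
    rcases le_total x x₀ with hx | hx
    · exact mul_nonpos_of_nonpos_of_nonneg (hneg x hx) (sub_nonneg.2 (hh hx))
    · exact mul_nonpos_of_nonneg_of_nonpos (hpos x hx) (sub_nonpos.2 (hh hx))
  have hshift : ∫ x, d x * (h x - h x₀) ∂ρ = ∫ x, d x * h x ∂ρ := by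
    simp_rw [mul_sub]
    rw [integral_sub hdh (hd.mul_const _), integral_mul_const, hd_zero, zero_mul, sub_zero]
  rw [← hshift]
  exact integral_nonpos hpt

lemma map_linear_prod_gaussianReal (m₁ m₂ a b : ℝ) (v₁ v₂ : ℝ≥0) :
    ((gaussianReal m₁ v₁).prod (gaussianReal m₂ v₂)).map (fun p : ℝ × ℝ => a * p.1 + b * p.2)
      = gaussianReal (a * m₁ + b * m₂)
          (⟨a ^ 2, sq_nonneg a⟩ * v₁ + ⟨b ^ 2, sq_nonneg b⟩ * v₂) := by
  have hsplit : (fun p : ℝ × ℝ => a * p.1 + b * p.2)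
      = (fun p : ℝ × ℝ => p.1 + p.2) ∘ Prod.map (a * ·) (b * ·) := rfl
  rw [hsplit, ← Measure.map_map (by fun_prop) (by fun_prop),
    ← Measure.map_prod_map _ _ (by fun_prop) (by fun_prop),
    gaussianReal_map_const_mul, gaussianReal_map_const_mul]
  exact gaussianReal_conv_gaussianReal

lemma lintegral_measure_setOf_lt_affine {a b : ℝ} (hab : a ^ 2 + b ^ 2 = 1) (c : ℝ) :
    ∫⁻ x, gaussianReal 0 1 {y | c < a * x + b * y} ∂gaussianReal 0 1
      = gaussianReal 0 1 (Ioi c) := by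
  have hs : MeasurableSet {p : ℝ × ℝ | c < a * p.1 + b * p.2} :=
    measurableSet_lt measurable_const (by fun_prop)
  refine (Measure.prod_apply hs).symm.trans ?_
  refine (Measure.map_apply (f := fun p : ℝ × ℝ => a * p.1 + b * p.2) (by fun_prop)
    measurableSet_Ioi).symm.trans ?_
  rw [map_linear_prod_gaussianReal]
  congr 2
  · ring
  · ext
    change a ^ 2 * 1 + b ^ 2 * 1 = 1
    linarith

lemma map_prodMk_prodMk_eq_prod {Ω β : Type*} [MeasurableSpace Ω] [MeasurableSpace β]
    {μ : Measure Ω} [IsFiniteMeasure μ] {X Y Z : Ω → β}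
    (hm : ∀ i, Measurable (![X, Y, Z] i)) (hind : iIndepFun ![X, Y, Z] μ) :
    μ.map (fun ω => (X ω, Y ω, Z ω)) = (μ.map X).prod ((μ.map Y).prod (μ.map Z)) := by
  have hX : Measurable X := hm 0
  have hY : Measurable Y := hm 1
  have hZ : Measurable Z := hm 2
  have hYZ : IndepFun Y Z μ := hind.indepFun (i := 1) (j := 2) (by decide)
  have hXYZ : IndepFun X (fun ω => (Y ω, Z ω)) μ :=
    (hind.indepFun_prodMk hm 1 2 0 (by decide) (by decide)).symm
  rw [(indepFun_iff_map_prod_eq_prod_map_map hX.aemeasurable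
      (hY.prodMk hZ).aemeasurable).mp hXYZ,
    (indepFun_iff_map_prod_eq_prod_map_map hY.aemeasurable hZ.aemeasurable).mp hYZ]

lemma prod_prod_setOf_eq_lintegral (ν₁ : Measure ℝ) {ν₂ ν₃ : Measure ℝ} [SFinite ν₂] [SFinite ν₃]
    (a b c c' : ℝ) :
    (ν₁.prod (ν₂.prod ν₃)) {p | c < a * p.1 + b * p.2.1 ∧ p.1 ≤ p.2.2 + c'}
      = ∫⁻ x, ν₂ {y | c < a * x + b * y} * ν₃ (Ici (x - c')) ∂ν₁ := by
  rw [Measure.prod_apply (by measurability)]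
  congr 1 with x
  rw [← Measure.prod_prod]
  congr 1 with ⟨y, z⟩
  simp

noncomputable def affineTail (a b c x : ℝ) : ℝ :=
  (gaussianReal 0 1).real {y | c < a * x + b * y}

lemma affineTail_eq_Ioi {a b : ℝ} (hb : 0 < b) (c x : ℝ) :
    affineTail a b c x = (gaussianReal 0 1).real (Ioi ((c - a * x) / b)) := by
  rw [affineTail]
  congr 1 with y
  rw [mem_ofPred_eq, mem_Ioi, div_lt_iff₀ hb]
  constructor <;> intro h <;> linarith

lemma norm_affineTail_le_one (a b c x : ℝ) : ‖affineTail a b c x‖ ≤ 1 := by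
  rw [affineTail, Real.norm_of_nonneg measureReal_nonneg]
  exact measureReal_le_one

lemma measurable_measure_setOf_lt_affine (a b c : ℝ) :
    Measurable fun x => gaussianReal 0 1 {y | c < a * x + b * y} :=
  measurable_measure_prodMk_left (s := {p : ℝ × ℝ | c < a * p.1 + b * p.2})
    (measurableSet_lt measurable_const (by fun_prop))

lemma measurable_affineTail (a b c : ℝ) : Measurable (affineTail a b c) :=
  (measurable_measure_setOf_lt_affine a b c).ennreal_toReal

lemma integrable_affineTail (μ : Measure ℝ) [IsFiniteMeasure μ] (a b c : ℝ) :
    Integrable (affineTail a b c) μ :=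
  .of_bound (measurable_affineTail a b c).aestronglyMeasurable 1
    (ae_of_all _ (norm_affineTail_le_one a b c))

lemma integral_affineTail {a b : ℝ} (hab : a ^ 2 + b ^ 2 = 1) (c : ℝ) :
    ∫ x, affineTail a b c x ∂gaussianReal 0 1 = (gaussianReal 0 1).real (Ioi c) := by
  rw [measureReal_def, ← lintegral_measure_setOf_lt_affine hab c]
  exact integral_toReal (measurable_measure_setOf_lt_affine a b c).aemeasurable
    (ae_of_all _ fun _ => measure_lt_top _ _)

lemma exists_affineTail_crossing {a₁ b₁ a₂ b₂ : ℝ} (hb₁ : 0 < b₁) (hb₂ : 0 < b₂)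
    (h : a₁ * b₂ < a₂ * b₁) (c : ℝ) :
    ∃ x₀, (∀ x ≤ x₀, affineTail a₂ b₂ c x ≤ affineTail a₁ b₁ c x) ∧
      ∀ x, x₀ ≤ x → affineTail a₁ b₁ c x ≤ affineTail a₂ b₂ c x := by
  have hD : 0 < a₂ * b₁ - a₁ * b₂ := by linarith
  -- `x₀` is where the thresholds `(c - aᵢ x) / bᵢ` of the two half-lines coincide.
  refine ⟨(b₁ - b₂) * c / (a₂ * b₁ - a₁ * b₂), fun x hx => ?_, fun x hx => ?_⟩
  · rw [le_div_iff₀ hD] at hx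
    rw [affineTail_eq_Ioi hb₁, affineTail_eq_Ioi hb₂]
    refine measureReal_mono (Ioi_subset_Ioi ?_)
    rw [div_le_div_iff₀ hb₁ hb₂]
    linarith
  · rw [div_le_iff₀ hD] at hx
    rw [affineTail_eq_Ioi hb₁, affineTail_eq_Ioi hb₂]
    refine measureReal_mono (Ioi_subset_Ioi ?_)
    rw [div_le_div_iff₀ hb₂ hb₁]
    linarith

lemma integral_affineTail_mul_antitone_le {a₁ b₁ a₂ b₂ : ℝ} (hab₁ : a₁ ^ 2 + b₁ ^ 2 = 1)
    (hab₂ : a₂ ^ 2 + b₂ ^ 2 = 1) (hb₁ : 0 < b₁) (hb₂ : 0 < b₂) (h : a₁ * b₂ < a₂ * b₁)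
    (c : ℝ) {g : ℝ → ℝ} (hg : Antitone g) (hg_int : Integrable g (gaussianReal 0 1)) :
    ∫ x, affineTail a₂ b₂ c x * g x ∂gaussianReal 0 1
      ≤ ∫ x, affineTail a₁ b₁ c x * g x ∂gaussianReal 0 1 := by
  obtain ⟨x₀, hleft, hright⟩ := exists_affineTail_crossing hb₁ hb₂ h c
  have hmul : ∀ a b, Integrable (fun x => affineTail a b c x * g x) (gaussianReal 0 1) :=
    fun a b => hg_int.bdd_mul (measurable_affineTail a b c).aestronglyMeasurable
      (ae_of_all _ (norm_affineTail_le_one a b c))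
  have key := integral_mul_antitone_nonpos
    (d := fun x => affineTail a₂ b₂ c x - affineTail a₁ b₁ c x)
    ((integrable_affineTail _ a₂ b₂ c).sub (integrable_affineTail _ a₁ b₁ c))
    (by simp only [sub_mul]; exact (hmul a₂ b₂).sub (hmul a₁ b₁))
    (by rw [integral_sub (integrable_affineTail _ _ _ _) (integrable_affineTail _ _ _ _),
      integral_affineTail hab₁, integral_affineTail hab₂, sub_self])
    hg (fun x hx => sub_nonpos.2 (hleft x hx)) (fun x hx => sub_nonneg.2 (hright x hx))
  simp_rw [sub_mul] at key
  rw [integral_sub (hmul a₂ b₂) (hmul a₁ b₁)] at key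
  linarith

lemma antitone_measureReal_Ici_sub (ν : Measure ℝ) [IsFiniteMeasure ν] (c' : ℝ) :
    Antitone fun x => ν.real (Ici (x - c')) :=
  fun _ _ hxy => measureReal_mono (Ici_subset_Ici.2 (by linarith))

lemma toReal_cond_apply_eq_integral {Ω : Type*} [MeasurableSpace Ω] {μ : Measure Ω}
    [IsFiniteMeasure μ] {Z1 Z2 Z3 : Ω → ℝ} (hZm : ∀ i, Measurable (![Z1, Z2, Z3] i))
    (hZ : ∀ i, μ.map (![Z1, Z2, Z3] i) = gaussianReal 0 1) (hindep : iIndepFun ![Z1, Z2, Z3] μ)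
    (a b c c' : ℝ) :
    ((μ[|{ω | Z1 ω ≤ Z3 ω + c'}]) {ω | a * Z1 ω + b * Z2 ω > c}).toReal
      = (μ {ω | Z1 ω ≤ Z3 ω + c'})⁻¹.toReal *
          ∫ x, affineTail a b c x * (gaussianReal 0 1).real (Ici (x - c')) ∂gaussianReal 0 1 := by
  have hZ1 : Measurable Z1 := hZm 0
  have hZ2 : Measurable Z2 := hZm 1
  have hZ3 : Measurable Z3 := hZm 2
  have hlaw : μ.map (fun ω => (Z1 ω, Z2 ω, Z3 ω))
      = (gaussianReal 0 1).prod ((gaussianReal 0 1).prod (gaussianReal 0 1)) := by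
    have h1 : μ.map Z1 = gaussianReal 0 1 := hZ 0
    have h2 : μ.map Z2 = gaussianReal 0 1 := hZ 1
    have h3 : μ.map Z3 = gaussianReal 0 1 := hZ 2
    rw [map_prodMk_prodMk_eq_prod hZm hindep, h1, h2, h3]
  have hevent : {ω | Z1 ω ≤ Z3 ω + c'} ∩ {ω | a * Z1 ω + b * Z2 ω > c}
      = (fun ω => (Z1 ω, Z2 ω, Z3 ω)) ⁻¹' {p | c < a * p.1 + b * p.2.1 ∧ p.1 ≤ p.2.2 + c'} := by
    ext ω
    exact and_comm
  have hint_nonneg : 0 ≤ᵐ[gaussianReal 0 1]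
      fun x => affineTail a b c x * (gaussianReal 0 1).real (Ici (x - c')) :=
    ae_of_all _ fun _ => mul_nonneg measureReal_nonneg measureReal_nonneg
  rw [cond_apply (measurableSet_le hZ1 (hZ3.add_const c')), ENNReal.toReal_mul, hevent,
    ← Measure.map_apply (by fun_prop) (by measurability), hlaw, prod_prod_setOf_eq_lintegral,
    integral_eq_lintegral_of_nonneg_ae hint_nonneg ((measurable_affineTail a b c).mul
      (antitone_measureReal_Ici_sub _ c').measurable).aestronglyMeasurable]
  congr 3 with x
  rw [affineTail, ENNReal.ofReal_mul measureReal_nonneg, ofReal_measureReal, ofReal_measureReal]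

/-- Lemma 1: `Q(w) = P(√w Z₁ + √(1-w) Z₂ > c ∣ Z₁ ≤ Z₃ + c')` is monotonically
decreasing in `w` on `(0,1)`, for mutually independent standard normal `Z₁, Z₂, Z₃`. -/
theorem Q_antitoneOn {Ω : Type*} [MeasurableSpace Ω]
    (μ : Measure Ω) [IsProbabilityMeasure μ]
    (Z1 Z2 Z3 : Ω → ℝ) (hZm : ∀ i, Measurable (![Z1, Z2, Z3] i))
    (hZ : ∀ i, μ.map (![Z1, Z2, Z3] i) = gaussianReal 0 1)
    (hindep : iIndepFun ![Z1, Z2, Z3] μ)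
    (c c' : ℝ) :
    AntitoneOn
      (fun w : ℝ =>
        ((μ[|{ω | Z1 ω ≤ Z3 ω + c'}])
            {ω | Real.sqrt w * Z1 ω + Real.sqrt (1 - w) * Z2 ω > c}).toReal)
      (Set.Ioo (0 : ℝ) 1) := by
  intro w₁ hw₁ w₂ hw₂ hle
  obtain rfl | hlt := hle.eq_or_lt
  · exact le_rfl
  have hsq : ∀ w ∈ Ioo (0 : ℝ) 1, √w ^ 2 + √(1 - w) ^ 2 = 1 := fun w hw => by
    rw [Real.sq_sqrt hw.1.le, Real.sq_sqrt (by linarith [hw.2])]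
    ring
  have hpos : ∀ w ∈ Ioo (0 : ℝ) 1, 0 < √(1 - w) := fun w hw =>
    Real.sqrt_pos.2 (by linarith [hw.2])
  have hcross : √w₁ * √(1 - w₂) < √w₂ * √(1 - w₁) :=
    mul_lt_mul'' (Real.sqrt_lt_sqrt hw₁.1.le hlt) (Real.sqrt_lt_sqrt (by linarith [hw₂.2])
      (by linarith)) (Real.sqrt_nonneg _) (Real.sqrt_nonneg _)
  have hupper := antitone_measureReal_Ici_sub (gaussianReal 0 1) c'
  have hupper_int : Integrable (fun x => (gaussianReal 0 1).real (Ici (x - c')))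
      (gaussianReal 0 1) :=
    .of_bound hupper.measurable.aestronglyMeasurable 1 (ae_of_all _ fun _ => by
      rw [Real.norm_of_nonneg measureReal_nonneg]
      exact measureReal_le_one)
  simp only [toReal_cond_apply_eq_integral hZm hZ hindep]
  exact mul_le_mul_of_nonneg_left (integral_affineTail_mul_antitone_le (hsq w₁ hw₁)
    (hsq w₂ hw₂) (hpos w₁ hw₁) (hpos w₂ hw₂) hcross c hupper hupper_int) ENNReal.toReal_nonneg
end

section
/- Let $Z_1, Z_2, Z_3$ be mutually independent standard normal random variables, let $c, c' \in \mathbb{R}$, and $0 < w_a \le w_b < 1$. Then $P(\sqrt{w_b}\, Z_1 + \sqrt{1-w_b}\, Z_2 > c \mid Z_1 \le Z_3 + c') \le P(\sqrt{w_a}\, Z_1 + \sqrt{1-w_a}\, Z_2 > c \mid Z_1 \le Z_3 + c')$. -/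
/-!
Conditioning on `Z₁ = z` decouples the two events: the probability of `Z₁ ≤ Z₃ + c'` together
with the crossing is `∫ H(z) F_w(z) dγ(z)`, where `H(z) = P(z ≤ Z₃ + c')` is decreasing and
`F_w(z) = P(√w z + √(1-w) Z₂ > c)`. Since `√w Z₁ + √(1-w) Z₂` is again standard normal,
`∫ F_w dγ` does not depend on `w`, and `F_{w_b} - F_{w_a}` changes sign once, from `≤ 0` to
`≥ 0`. Against the decreasing weight `H` its integral is therefore `≤ 0`.
-/

open MeasureTheory ProbabilityTheory Real Set
open scoped ENNReal

theorem ENNReal.mul_add_mul_le_mul_add_mul {a b u v : ℝ≥0∞} (hab : a ≤ b) (huv : u ≤ v) :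
    a * v + b * u ≤ a * u + b * v := by
  obtain ⟨e, rfl⟩ : ∃ e, b = a + e := ⟨b - a, (add_tsub_cancel_of_le hab).symm⟩
  calc a * v + (a + e) * u = a * u + (a * v + e * u) := by ring
    _ ≤ a * u + (a * v + e * v) := by gcongr
    _ = a * u + (a + e) * v := by ring

theorem lintegral_mul_le_of_single_crossing {α : Type*} [MeasurableSpace α] [LinearOrder α]
    {ν : Measure α} {f g h : α → ℝ≥0∞} (hf : AEMeasurable f ν) (hg : AEMeasurable g ν)
    (hfg : ∫⁻ x, f x ∂ν = ∫⁻ x, g x ∂ν) (hg_ne_top : ∫⁻ x, g x ∂ν ≠ ∞) (hh : Antitone h)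
    (x₀ : α) (hx₀ : h x₀ ≠ ∞) (hleft : ∀ x ≤ x₀, f x ≤ g x) (hright : ∀ x, x₀ ≤ x → g x ≤ f x) :
    ∫⁻ x, h x * f x ∂ν ≤ ∫⁻ x, h x * g x ∂ν := by
  have hpt : ∀ x, h x * f x + g x * h x₀ ≤ h x * g x + f x * h x₀ := fun x => by
    rcases le_total x x₀ with hx | hx
    · simpa only [mul_comm, add_comm] using
        ENNReal.mul_add_mul_le_mul_add_mul (hleft x hx) (hh hx)
    · simpa only [mul_comm, add_comm] using
        ENNReal.mul_add_mul_le_mul_add_mul (hright x hx) (hh hx)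
  have hint := lintegral_mono (μ := ν) hpt
  rw [lintegral_add_right' _ (hg.mul_const _), lintegral_add_right' _ (hf.mul_const _),
    lintegral_mul_const' _ _ hx₀, lintegral_mul_const' _ _ hx₀, hfg] at hint
  exact (ENNReal.add_le_add_iff_right (ENNReal.mul_ne_top hg_ne_top hx₀)).mp hint

theorem measure_inter_eq_lintegral_of_map_eq_prod {Ω α β γ : Type*} [MeasurableSpace Ω]
    [MeasurableSpace α] [MeasurableSpace β] [MeasurableSpace γ] {μ : Measure Ω} {X : Ω → α}
    {Y : Ω → β} {Z : Ω → γ} (hXYZ : Measurable fun ω => (X ω, Y ω, Z ω)) {ν₁ : Measure α}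
    {ν₂ : Measure β} {ν₃ : Measure γ} [SFinite ν₂] [SFinite ν₃]
    (hlaw : μ.map (fun ω => (X ω, Y ω, Z ω)) = ν₁.prod (ν₂.prod ν₃)) {s : Set (α × β)}
    {t : Set (α × γ)} (hs : MeasurableSet s) (ht : MeasurableSet t) :
    μ ({ω | (X ω, Y ω) ∈ s} ∩ {ω | (X ω, Z ω) ∈ t})
      = ∫⁻ x, ν₂ (Prod.mk x ⁻¹' s) * ν₃ (Prod.mk x ⁻¹' t) ∂ν₁ := by
  have hst : MeasurableSet {p : α × β × γ | (p.1, p.2.1) ∈ s ∧ (p.1, p.2.2) ∈ t} :=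
    (measurable_fst.prodMk measurable_snd.fst hs).inter
      (measurable_fst.prodMk measurable_snd.snd ht)
  change μ ((fun ω => (X ω, Y ω, Z ω)) ⁻¹' {p | (p.1, p.2.1) ∈ s ∧ (p.1, p.2.2) ∈ t}) = _
  rw [← Measure.map_apply hXYZ hst, hlaw, Measure.prod_apply hst]
  refine lintegral_congr fun x => ?_
  rw [← Measure.prod_prod]
  rfl

theorem iIndepFun.map_prodMk_prodMk {Ω ι β : Type*} [MeasurableSpace Ω] [MeasurableSpace β]
    {μ : Measure Ω} [IsFiniteMeasure μ] {f : ι → Ω → β} (hm : ∀ i, Measurable (f i))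
    (hindep : iIndepFun f μ) {i j k : ι} (hij : i ≠ j) (hik : i ≠ k) (hjk : j ≠ k) :
    μ.map (fun ω => (f i ω, f j ω, f k ω))
      = (μ.map (f i)).prod ((μ.map (f j)).prod (μ.map (f k))) := by
  have hi_jk : IndepFun (f i) (fun ω => (f j ω, f k ω)) μ :=
    (hindep.indepFun_prodMk hm j k i hij.symm hik.symm).symm
  rw [(indepFun_iff_map_prod_eq_prod_map_map (hm i).aemeasurable
      ((hm j).prodMk (hm k)).aemeasurable).mp hi_jk,
    (indepFun_iff_map_prod_eq_prod_map_map (hm j).aemeasurable (hm k).aemeasurable).mp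
      (hindep.indepFun hjk)]

theorem gaussianReal_prod_preimage_mul_add_mul {a b : ℝ} (hab : a ^ 2 + b ^ 2 = 1) {s : Set ℝ}
    (hs : MeasurableSet s) :
    (gaussianReal 0 1).prod (gaussianReal 0 1) ((fun p : ℝ × ℝ => a * p.1 + b * p.2) ⁻¹' s)
      = gaussianReal 0 1 s := by
  have hmap : ((gaussianReal 0 1).prod (gaussianReal 0 1)).map
      (fun p : ℝ × ℝ => a * p.1 + b * p.2) = gaussianReal 0 1 := by
    have : (fun p : ℝ × ℝ => a * p.1 + b * p.2)
        = (fun p : ℝ × ℝ => p.1 + p.2) ∘ Prod.map (a * ·) (b * ·) := rfl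
    rw [this, ← Measure.map_map (by fun_prop) (by fun_prop),
      ← Measure.map_prod_map _ _ (by fun_prop) (by fun_prop),
      gaussianReal_map_const_mul, gaussianReal_map_const_mul, ← Measure.conv,
    gaussianReal_conv_gaussianReal]
    congr 1
    · ring
    · ext; simp [hab]
  rw [← Measure.map_apply (by fun_prop) hs, hmap]

theorem exists_crossing_div {a b a' b' c : ℝ} (hb : 0 < b) (hb' : 0 < b') (h : a * b' < a' * b) :
    ∃ z₀, (∀ z ≤ z₀, (c - a * z) / b ≤ (c - a' * z) / b') ∧
      ∀ z, z₀ ≤ z → (c - a' * z) / b' ≤ (c - a * z) / b := by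
  have hd : 0 < a' * b - a * b' := sub_pos.mpr h
  refine ⟨c * (b - b') / (a' * b - a * b'), fun z hz => ?_, fun z hz => ?_⟩
  · rw [le_div_iff₀ hd] at hz
    rw [div_le_div_iff₀ hb hb']
    linarith
  · rw [div_le_iff₀ hd] at hz
    rw [div_le_div_iff₀ hb' hb]
    linarith

/-- The conditional probability of the crossing event given `Z₁ = z`. -/
noncomputable def crossingProb (w c z : ℝ) : ℝ≥0∞ :=
  gaussianReal 0 1 {y | √w * z + √(1 - w) * y > c}

theorem crossingProb_monotone (w c : ℝ) : Monotone (crossingProb w c) :=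
  fun z z' hz => measure_mono fun y (hy : c < √w * z + √(1 - w) * y) =>
    show c < √w * z' + √(1 - w) * y from hy.trans_le (by gcongr)

theorem lintegral_crossingProb {w : ℝ} (hw₀ : 0 ≤ w) (hw₁ : w ≤ 1) (c : ℝ) :
    ∫⁻ z, crossingProb w c z ∂(gaussianReal 0 1) = gaussianReal 0 1 (Ioi c) := by
  have hs : MeasurableSet ((fun p : ℝ × ℝ => √w * p.1 + √(1 - w) * p.2) ⁻¹' Ioi c) :=
    measurableSet_Ioi.preimage (by fun_prop)
  rw [← gaussianReal_prod_preimage_mul_add_mul (a := √w) (b := √(1 - w))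
      (by rw [sq_sqrt hw₀, sq_sqrt (sub_nonneg.mpr hw₁)]; ring) measurableSet_Ioi,
    Measure.prod_apply hs]
  rfl

theorem crossingProb_eq_Ioi {w : ℝ} (hw : w < 1) (c z : ℝ) :
    crossingProb w c z = gaussianReal 0 1 (Ioi ((c - √w * z) / √(1 - w))) := by
  have hpos : 0 < √(1 - w) := sqrt_pos.mpr (sub_pos.mpr hw)
  have hset : {y | √w * z + √(1 - w) * y > c} = Ioi ((c - √w * z) / √(1 - w)) := by
    ext y
    rw [mem_ofPred_eq, mem_Ioi, div_lt_iff₀ hpos]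
    constructor <;> intro <;> linarith
  rw [crossingProb, hset]

theorem crossingProb_single_crossing {wa wb : ℝ} (hwa : 0 ≤ wa) (hwab : wa ≤ wb) (hwb : wb < 1)
    (c : ℝ) : ∃ z₀, (∀ z ≤ z₀, crossingProb wb c z ≤ crossingProb wa c z) ∧
      ∀ z, z₀ ≤ z → crossingProb wa c z ≤ crossingProb wb c z := by
  rcases hwab.eq_or_lt with rfl | hlt
  · exact ⟨0, fun _ _ => le_rfl, fun _ _ => le_rfl⟩
  have hprod : √wa * √(1 - wb) < √wb * √(1 - wa) :=
    mul_lt_mul'' (sqrt_lt_sqrt hwa hlt) (sqrt_lt_sqrt (by linarith) (by linarith))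
      (sqrt_nonneg _) (sqrt_nonneg _)
  obtain ⟨z₀, hleft, hright⟩ := exists_crossing_div (c := c)
    (sqrt_pos.mpr (by linarith : 0 < 1 - wa)) (sqrt_pos.mpr (sub_pos.mpr hwb)) hprod
  simp only [crossingProb_eq_Ioi hwb, crossingProb_eq_Ioi (hlt.trans hwb)]
  exact ⟨z₀, fun z hz => measure_mono (Ioi_subset_Ioi (hleft z hz)),
    fun z hz => measure_mono (Ioi_subset_Ioi (hright z hz))⟩

/-- Comparison form of Lemma 1: for `0 < w_a ≤ w_b < 1`, the conditional crossing
probability with weight `w_b` is at most that with weight `w_a`, conditioning on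
`Z₁ ≤ Z₃ + c'`. -/
theorem Q_comparison {Ω : Type*} [MeasurableSpace Ω]
    (μ : Measure Ω) [IsProbabilityMeasure μ]
    (Z1 Z2 Z3 : Ω → ℝ) (hZm : ∀ i, Measurable (![Z1, Z2, Z3] i))
    (hZ : ∀ i, μ.map (![Z1, Z2, Z3] i) = gaussianReal 0 1)
    (hindep : iIndepFun ![Z1, Z2, Z3] μ)
    (c c' : ℝ) (wa wb : ℝ) (hwa : 0 < wa) (hwab : wa ≤ wb) (hwb : wb < 1) :
    (μ[|{ω | Z1 ω ≤ Z3 ω + c'}])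
        {ω | Real.sqrt wb * Z1 ω + Real.sqrt (1 - wb) * Z2 ω > c} ≤
      (μ[|{ω | Z1 ω ≤ Z3 ω + c'}])
        {ω | Real.sqrt wa * Z1 ω + Real.sqrt (1 - wa) * Z2 ω > c} := by
  set γ := gaussianReal 0 1
  have hlaw : μ.map (fun ω => (Z1 ω, Z3 ω, Z2 ω)) = γ.prod (γ.prod γ) := by
    have h := iIndepFun.map_prodMk_prodMk hZm hindep (i := 0) (j := 2) (k := 1)
      (by decide) (by decide) (by decide)
    rwa [hZ 0, hZ 1, hZ 2] at h
  have hmeas : Measurable fun ω => (Z1 ω, Z3 ω, Z2 ω) := by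
    simpa using (hZm 0).prodMk ((hZm 2).prodMk (hZm 1))
  have hA : MeasurableSet {ω | Z1 ω ≤ Z3 ω + c'} := by
    simpa using measurableSet_le (hZm 0) ((hZm 2).add_const c')
  have hsplit (w : ℝ) : μ ({ω | Z1 ω ≤ Z3 ω + c'} ∩ {ω | √w * Z1 ω + √(1 - w) * Z2 ω > c})
      = ∫⁻ z, γ {y | z ≤ y + c'} * crossingProb w c z ∂γ :=
    measure_inter_eq_lintegral_of_map_eq_prod hmeas hlaw (s := {p | p.1 ≤ p.2 + c'})
      (t := {p | √w * p.1 + √(1 - w) * p.2 > c})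
      (measurableSet_le measurable_fst (measurable_snd.add_const c'))
      (measurableSet_lt measurable_const (by fun_prop))
  have hcond : Antitone fun z => γ {y | z ≤ y + c'} :=
    fun _ _ hz => measure_mono fun _ hy => hz.trans hy
  have htotal (w : ℝ) (hw₀ : 0 ≤ w) (hw₁ : w ≤ 1) : ∫⁻ z, crossingProb w c z ∂γ = γ (Ioi c) :=
    lintegral_crossingProb hw₀ hw₁ c
  obtain ⟨z₀, hleft, hright⟩ := crossingProb_single_crossing hwa.le hwab hwb c
  rw [cond_apply hA, cond_apply hA, hsplit, hsplit]
  gcongr _ * ?_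
  refine lintegral_mul_le_of_single_crossing (crossingProb_monotone _ _).measurable.aemeasurable
    (crossingProb_monotone _ _).measurable.aemeasurable ?_ ?_ hcond z₀ (measure_ne_top _ _)
    hleft hright
  · rw [htotal wb (hwa.le.trans hwab) hwb.le, htotal wa hwa.le (hwab.trans hwb.le)]
  · exact htotal wa hwa.le (hwab.trans hwb.le) ▸ measure_ne_top _ _
end

section
/- Let $Z_1, Z_2, Z_3$ be mutually independent standard normal random variables, $c = \Phi^{-1}(1-\alpha)$ for $\alpha \in (0,1)$, $c' \in \mathbb{R}$, and let $0 < w_1 \le w_2 < 1$. Define the random variable $S = \sqrt{w_1}\,Z_1 + \sqrt{1-w_1}\,Z_2$ on the event $\{Z_1 \ge Z_3 + c'\}$ and $S = \sqrt{w_2}\,Z_1 + \sqrt{1-w_2}\,Z_2$ on the complementary event $\{Z_1 < Z_3 + c'\}$. Then $P(S > c) \le \alpha$. -/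
/-!
Put `Z = (Z₁, Z₂, Z₃)`, a standard Gaussian vector of `ℝ³`, `e = (1, 0, -1)` and the unit vectors
`uᵢ = (√wᵢ, √(1 - wᵢ), 0)`. With the half-space `A = {⟪e, z⟫ ≥ c'}` and `Bᵢ = {⟪uᵢ, z⟫ > c}`,
the event `{S > c}` is `{Z ∈ (B₁ ∩ A) ∪ (B₂ \ A)}`. The reflection swapping `u₁` and `u₂` preserves
the Gaussian law and maps `(B₁ \ B₂) ∩ A` into `(B₂ \ B₁) ∩ A`, because on `B₁ \ B₂` it can only
increase `⟪e, ·⟫` (here `⟪e, u₁⟫ = √w₁ ≤ √w₂ = ⟪e, u₂⟫` is used). Hence `P(Z ∈ B₁ ∩ A) ≤ P(Z ∈ B₂ ∩ A)`,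
so `P(S > c) ≤ P(Z ∈ B₂) = 1 - Φ(c) = α`.
-/

open MeasureTheory ProbabilityTheory

/-- The standard normal cumulative distribution function `Φ`. -/
noncomputable def stdNormalCDF (x : ℝ) : ℝ := ((gaussianReal 0 1) (Set.Iic x)).toReal

open Submodule
open scoped RealInnerProductSpace

section Measure

variable {α : Type*} [MeasurableSpace α] {μ : Measure α}

theorem measure_le_of_measure_diff_le {s t : Set α} (hs : MeasurableSet s) (ht : MeasurableSet t)
    (h : μ (s \ t) ≤ μ (t \ s)) : μ s ≤ μ t := by
  rw [← measure_inter_add_sdiff s ht, ← measure_inter_add_sdiff t hs, Set.inter_comm]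
  gcongr

theorem measure_ite_le {t s s' : Set α} (ht : MeasurableSet t) (h : μ (s ∩ t) ≤ μ (s' ∩ t)) :
    μ (t.ite s s') ≤ μ s' :=
  calc μ (t.ite s s') ≤ μ (s ∩ t) + μ (s' \ t) := measure_union_le _ _
    _ ≤ μ (s' ∩ t) + μ (s' \ t) := by gcongr
    _ = μ s' := measure_inter_add_sdiff s' ht

end Measure

section Reflection

variable {E : Type*} [NormedAddCommGroup E] [InnerProductSpace ℝ E]

theorem inner_reflection_right (K : Submodule ℝ E) [K.HasOrthogonalProjection] (u x : E) :
    ⟪u, K.reflection x⟫ = ⟪K.reflection u, x⟫ := by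
  rw [LinearIsometryEquiv.inner_map_eq_flip, reflection_symm]

theorem inner_reflection_orthogonal_singleton (d e x : E) :
    ⟪e, reflection (ℝ ∙ d)ᗮ x⟫ = ⟪e, x⟫ - 2 * (⟪d, x⟫ / ‖d‖ ^ 2) * ⟪e, d⟫ := by
  rw [reflection_orthogonal_apply, reflection_singleton_apply]
  simp only [inner_neg_right, inner_sub_right, two_smul, inner_add_right, real_inner_smul_right,
    RCLike.ofReal_real_eq_id, id_eq]
  ring

theorem inner_reflection_orthogonal_singleton_le {d e x : E} (he : ⟪e, d⟫ ≤ 0)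
    (hx : ⟪d, x⟫ ≤ 0) : ⟪e, reflection (ℝ ∙ d)ᗮ x⟫ ≤ ⟪e, x⟫ := by
  have : 0 ≤ ⟪d, x⟫ / ‖d‖ ^ 2 * ⟪e, d⟫ :=
    mul_nonneg_of_nonpos_of_nonpos (div_nonpos_of_nonpos_of_nonneg hx (by positivity)) he
  rw [inner_reflection_orthogonal_singleton]
  linarith

variable [MeasurableSpace E] [BorelSpace E]

theorem measure_inter_le_of_measurePreserving_reflection {γ : Measure E} {u v e : E}
    (huv : ‖u‖ = ‖v‖) (he : ⟪e, u⟫ ≤ ⟪e, v⟫)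
    (hγ : MeasurePreserving (reflection (ℝ ∙ (u - v))ᗮ) γ γ) (a b : ℝ) :
    γ ({x | b < ⟪u, x⟫} ∩ {x | a ≤ ⟪e, x⟫}) ≤ γ ({x | b < ⟪v, x⟫} ∩ {x | a ≤ ⟪e, x⟫}) := by
  set R := reflection (ℝ ∙ (u - v))ᗮ
  have hmeas : ∀ w : E, MeasurableSet ({x | b < ⟪w, x⟫} ∩ {x | a ≤ ⟪e, x⟫}) := fun w =>
    (measurableSet_lt measurable_const (by fun_prop)).inter
      (measurableSet_le measurable_const (by fun_prop))
  refine measure_le_of_measure_diff_le (hmeas u) (hmeas v) ?_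
  rw [← hγ.measure_preimage ((hmeas u).diff (hmeas v)).nullMeasurableSet]
  refine measure_mono fun x ⟨⟨hRu, hRe⟩, hRv⟩ => ?_
  have hRuv : R u = v := reflection_sub huv
  have hRvu : R v = u := by rw [← hRuv, reflection_reflection]
  simp only [Set.mem_inter_iff, Set.mem_ofPred_eq, not_and] at hRe hRu hRv ⊢
  rw [inner_reflection_right, hRuv] at hRu
  have hux : ⟪u, x⟫ ≤ b := by
    by_contra! h
    rw [inner_reflection_right, hRvu] at hRv
    exact hRv h hRe
  have hex : ⟪e, R x⟫ ≤ ⟪e, x⟫ := by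
    apply inner_reflection_orthogonal_singleton_le <;>
      simp only [inner_sub_left, inner_sub_right] <;> linarith
  exact ⟨⟨hRu, hRe.trans hex⟩, fun h => (h.1.trans_le hux).false⟩

end Reflection

section Gaussian

variable {E : Type*} [NormedAddCommGroup E] [InnerProductSpace ℝ E] [FiniteDimensional ℝ E]
  [MeasurableSpace E] [BorelSpace E]

theorem stdGaussian_map_inner {u : E} (hu : ‖u‖ = 1) :
    (stdGaussian E).map (⟪u, ·⟫) = gaussianReal 0 1 := by
  have h := IsGaussian.map_eq_gaussianReal (μ := stdGaussian E) (innerSL ℝ u)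
  rw [integral_strongDual_stdGaussian, variance_dual_stdGaussian, innerSL_apply_norm, hu] at h
  simpa using h

theorem stdGaussian_real_inner_gt {u : E} (hu : ‖u‖ = 1) (c : ℝ) :
    (stdGaussian E).real {x | c < ⟪u, x⟫} = 1 - stdNormalCDF c := by
  rw [show {x | c < ⟪u, x⟫} = (⟪u, ·⟫) ⁻¹' Set.Ioi c from rfl, measureReal_def,
    ← Measure.map_apply (by fun_prop) measurableSet_Ioi, stdGaussian_map_inner hu,
    ← Set.compl_Iic, ← measureReal_def, probReal_compl_eq_one_sub measurableSet_Iic]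
  rfl

end Gaussian

theorem map_toLp_eq_stdGaussian {ι Ω : Type*} [Fintype ι] [MeasurableSpace Ω] {μ : Measure Ω}
    [IsProbabilityMeasure μ] {X : ι → Ω → ℝ} (hXm : ∀ i, Measurable (X i))
    (hX : ∀ i, μ.map (X i) = gaussianReal 0 1) (hind : iIndepFun X μ) :
    μ.map (fun ω => WithLp.toLp 2 (fun i => X i ω)) = stdGaussian (EuclideanSpace ℝ ι) := by
  rw [← map_pi_eq_stdGaussian, ← funext hX,
    ← (iIndepFun_iff_map_fun_eq_pi_map fun i => (hXm i).aemeasurable).1 hind,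
    Measure.map_map (by fun_prop) (by fun_prop)]
  rfl

noncomputable def weightVec (w : ℝ) : EuclideanSpace ℝ (Fin 3) := !₂[√w, √(1 - w), 0]

def selectionVec : EuclideanSpace ℝ (Fin 3) := !₂[1, 0, -1]

theorem norm_weightVec {w : ℝ} (h0 : 0 ≤ w) (h1 : w ≤ 1) : ‖weightVec w‖ = 1 := by
  rw [EuclideanSpace.norm_eq]
  simp [weightVec, Fin.sum_univ_three, Real.sq_sqrt h0, Real.sq_sqrt (sub_nonneg.2 h1)]

theorem inner_weightVec (w : ℝ) (z : Fin 3 → ℝ) :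
    ⟪weightVec w, WithLp.toLp 2 z⟫ = √w * z 0 + √(1 - w) * z 1 := by
  simp [weightVec, PiLp.inner_apply, Fin.sum_univ_three, mul_comm]

theorem inner_selectionVec (z : Fin 3 → ℝ) : ⟪selectionVec, WithLp.toLp 2 z⟫ = z 0 - z 2 := by
  simp [selectionVec, PiLp.inner_apply, Fin.sum_univ_three]
  ring

theorem inner_selectionVec_weightVec_mono {w₁ w₂ : ℝ} (h : w₁ ≤ w₂) :
    ⟪selectionVec, weightVec w₁⟫ ≤ ⟪selectionVec, weightVec w₂⟫ := by
  simpa [weightVec, inner_selectionVec] using Real.sqrt_le_sqrt h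

theorem rabr_type_I_error_general {Ω : Type*} [MeasurableSpace Ω]
    (μ : Measure Ω) [IsProbabilityMeasure μ]
    (Z1 Z2 Z3 : Ω → ℝ) (hZm : ∀ i, Measurable (![Z1, Z2, Z3] i))
    (hZ : ∀ i, μ.map (![Z1, Z2, Z3] i) = gaussianReal 0 1)
    (hindep : iIndepFun ![Z1, Z2, Z3] μ)
    (α c c' : ℝ) (hc : stdNormalCDF c = 1 - α)
    (w1 w2 : ℝ) (hw1 : 0 < w1) (hw12 : w1 ≤ w2) (hw2 : w2 < 1)
    (S : Ω → ℝ)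
    (hS : ∀ ω, S ω = if Z1 ω ≥ Z3 ω + c' then
        Real.sqrt w1 * Z1 ω + Real.sqrt (1 - w1) * Z2 ω
      else Real.sqrt w2 * Z1 ω + Real.sqrt (1 - w2) * Z2 ω) :
    (μ {ω | S ω > c}).toReal ≤ α := by
  set γ := stdGaussian (EuclideanSpace ℝ (Fin 3))
  set Z : Ω → EuclideanSpace ℝ (Fin 3) := fun ω => WithLp.toLp 2 (fun i => ![Z1, Z2, Z3] i ω)
  have hlaw : μ.map Z = γ := map_toLp_eq_stdGaussian hZm hZ hindep
  set A := {x : EuclideanSpace ℝ (Fin 3) | c' ≤ ⟪selectionVec, x⟫}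
  set B := fun w => {x : EuclideanSpace ℝ (Fin 3) | c < ⟪weightVec w, x⟫}
  have hA : MeasurableSet A := measurableSet_le measurable_const (by fun_prop)
  have hB : ∀ w, MeasurableSet (B w) := fun w => measurableSet_lt measurable_const (by fun_prop)
  have hevent : {ω | S ω > c} = Z ⁻¹' A.ite (B w1) (B w2) := by
    ext ω
    simp only [Set.mem_ofPred_eq, Set.mem_preimage, Set.ite, Set.mem_union, Set.mem_inter_iff,
      Set.mem_sdiff, Z, A, B, inner_weightVec, inner_selectionVec, hS, Matrix.cons_val_zero,
      Matrix.cons_val_one, Matrix.cons_val_two]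
    split_ifs with h <;> simp [le_sub_iff_add_le', h]
  have hreflection : MeasurePreserving (reflection (ℝ ∙ (weightVec w1 - weightVec w2))ᗮ) γ γ :=
    ⟨(LinearIsometryEquiv.continuous _).measurable, stdGaussian_map _⟩
  calc (μ {ω | S ω > c}).toReal = γ.real (A.ite (B w1) (B w2)) := by
        rw [hevent, measureReal_def, ← hlaw, Measure.map_apply (by fun_prop) (hA.ite (hB w1) (hB w2))]
    _ ≤ γ.real (B w2) := by
        refine ENNReal.toReal_mono (measure_ne_top _ _) (measure_ite_le hA ?_)
        refine measure_inter_le_of_measurePreserving_reflection ?_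
          (inner_selectionVec_weightVec_mono hw12) hreflection c' c
        rw [norm_weightVec, norm_weightVec] <;> linarith
    _ = α := by rw [stdGaussian_real_inner_gt (norm_weightVec (by linarith) hw2.le), hc]; ring

/-- Theorem 1 (core): the adaptively weighted statistic, which uses the smaller
weight `w₁` exactly on the selection event `{Z₁ ≥ Z₃ + c'}` and the larger weight
`w₂` otherwise, crosses `c = Φ⁻¹(1-α)` with probability at most `α`. -/
theorem rabr_type_I_error {Ω : Type*} [MeasurableSpace Ω]
    (μ : Measure Ω) [IsProbabilityMeasure μ]
    (Z1 Z2 Z3 : Ω → ℝ) (hZm : ∀ i, Measurable (![Z1, Z2, Z3] i))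
    (hZ : ∀ i, μ.map (![Z1, Z2, Z3] i) = gaussianReal 0 1)
    (hindep : iIndepFun ![Z1, Z2, Z3] μ)
    (α c c' : ℝ) (hα : α ∈ Set.Ioo (0 : ℝ) 1) (hc : stdNormalCDF c = 1 - α)
    (w1 w2 : ℝ) (hw1 : 0 < w1) (hw12 : w1 ≤ w2) (hw2 : w2 < 1)
    (S : Ω → ℝ)
    (hS : ∀ ω, S ω = if Z1 ω ≥ Z3 ω + c' then
        Real.sqrt w1 * Z1 ω + Real.sqrt (1 - w1) * Z2 ω
      else Real.sqrt w2 * Z1 ω + Real.sqrt (1 - w2) * Z2 ω) :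
    (μ {ω | S ω > c}).toReal ≤ α :=
  rabr_type_I_error_general μ Z1 Z2 Z3 hZm hZ hindep α c c' hc w1 w2 hw1 hw12 hw2 S hS
end

section
/- Fix $\eta \ge 0$, a group index $g$, and positive targets $\tau_0, \ldots, \tau_m$ summing to 1. With all other $\theta_j$ ($j \ne g$) held proportionally fixed, the DBCD allocation probability $a_g(\eta, \theta, \tau) = \frac{\tau_g(\tau_g/\theta_g)^\eta}{\sum_j \tau_j(\tau_j/\theta_j)^\eta}$ is a non-increasing function of $\theta_g \in (0,1)$. In particular, for $m=1$ (two arms, with $\theta_1 = 1 - \theta_0$), $a_0$ is strictly decreasing in $\theta_0$ when $\eta > 0$. -/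
open Finset

private lemma dbcd_frac_le {a b a' b' : ℝ} (ha : 0 < a) (hb : 0 < b)
    (ha' : 0 < a') (hb' : 0 < b') (h1 : a' ≤ a) (h2 : b ≤ b') :
    a' / (a' + b') ≤ a / (a + b) := by
  rw [div_le_div_iff₀ (by linarith) (by linarith)]
  nlinarith

private lemma dbcd_frac_lt {a b a' b' : ℝ} (ha : 0 < a) (hb : 0 < b)
    (ha' : 0 < a') (hb' : 0 < b') (h1 : a' < a) (h2 : b < b') :
    a' / (a' + b') < a / (a + b) := by
  rw [div_lt_div_iff₀ (by linarith) (by linarith)]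
  nlinarith

/-- Self-correcting property of the DBCD allocation function: with the other
coordinates held proportionally fixed, `a_g` is non-increasing in `θ_g`; and in
the two-arm case (`θ₁ = 1 - θ₀`) with `η > 0`, `a₀` is strictly decreasing
in `θ₀`. -/
theorem dbcd_allocation_monotone (m : ℕ) (hm : 0 < m) (η : ℝ) (hη : 0 ≤ η)
    (g : Fin (m + 1)) (τ : Fin (m + 1) → ℝ)
    (hτpos : ∀ j, 0 < τ j) (hτsum : ∑ j, τ j = 1) :
    (∀ θ θ' : Fin (m + 1) → ℝ,
      (∀ j, 0 < θ j) → (∑ j, θ j = 1) → (∀ j, 0 < θ' j) → (∑ j, θ' j = 1) →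
      θ g ≤ θ' g → (∀ j, j ≠ g → θ' j = (1 - θ' g) / (1 - θ g) * θ j) →
      τ g * (τ g / θ' g) ^ η / (∑ j, τ j * (τ j / θ' j) ^ η) ≤
        τ g * (τ g / θ g) ^ η / (∑ j, τ j * (τ j / θ j) ^ η)) ∧
    (∀ τ0 τ1 : ℝ, 0 < τ0 → 0 < τ1 → τ0 + τ1 = 1 → 0 < η →
      ∀ θ0 θ0' : ℝ, θ0 ∈ Set.Ioo (0 : ℝ) 1 → θ0' ∈ Set.Ioo (0 : ℝ) 1 → θ0 < θ0' →
      τ0 * (τ0 / θ0') ^ η / (τ0 * (τ0 / θ0') ^ η + τ1 * (τ1 / (1 - θ0')) ^ η) <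
        τ0 * (τ0 / θ0) ^ η / (τ0 * (τ0 / θ0) ^ η + τ1 * (τ1 / (1 - θ0)) ^ η)) := by
  constructor
  · intro θ θ' hθ hθs hθ' hθ's hle hprop
    -- erase g is nonempty
    have hne : (Finset.univ.erase g).Nonempty := by
      rw [← Finset.card_pos, Finset.card_erase_of_mem (mem_univ g), Finset.card_univ,
        Fintype.card_fin]
      omega
    have hsum1 : ∑ j ∈ Finset.univ.erase g, θ j > 0 :=
      Finset.sum_pos (fun j _ => hθ j) hne
    have hsum1' : ∑ j ∈ Finset.univ.erase g, θ' j > 0 :=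
      Finset.sum_pos (fun j _ => hθ' j) hne
    have hdecθ : θ g + ∑ j ∈ Finset.univ.erase g, θ j = 1 := by
      rw [Finset.add_sum_erase _ _ (mem_univ g)]; exact hθs
    have hdecθ' : θ' g + ∑ j ∈ Finset.univ.erase g, θ' j = 1 := by
      rw [Finset.add_sum_erase _ _ (mem_univ g)]; exact hθ's
    have hθg1 : θ g < 1 := by linarith
    have hθ'g1 : θ' g < 1 := by linarith
    have hc1 : (1 - θ' g) / (1 - θ g) ≤ 1 :=
      div_le_one_of_le₀ (by linarith) (by linarith)
    -- termwise bounds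
    have hterm : ∀ j ∈ Finset.univ.erase g,
        τ j * (τ j / θ j) ^ η ≤ τ j * (τ j / θ' j) ^ η := by
      intro j hj
      have hjg : j ≠ g := Finset.ne_of_mem_erase hj
      have hθ'j : θ' j ≤ θ j := by
        rw [hprop j hjg]
        nlinarith [(hθ j), hc1]
      gcongr <;> first
        | exact div_nonneg (hτpos j).le (hθ j).le
        | exact (hτpos j).le
        | exact hθ' j
        | exact hθ'j
    -- sums decomposed
    rw [← Finset.add_sum_erase _ (fun j => τ j * (τ j / θ' j) ^ η) (mem_univ g),
      ← Finset.add_sum_erase _ (fun j => τ j * (τ j / θ j) ^ η) (mem_univ g)]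
    apply dbcd_frac_le
    · exact mul_pos (hτpos g) (Real.rpow_pos_of_pos (div_pos (hτpos g) (hθ g)) η)
    · exact Finset.sum_pos (fun j _ =>
        mul_pos (hτpos j) (Real.rpow_pos_of_pos (div_pos (hτpos j) (hθ j)) η)) hne
    · exact mul_pos (hτpos g) (Real.rpow_pos_of_pos (div_pos (hτpos g) (hθ' g)) η)
    · exact Finset.sum_pos (fun j _ =>
        mul_pos (hτpos j) (Real.rpow_pos_of_pos (div_pos (hτpos j) (hθ' j)) η)) hne
    · gcongr <;> first
        | exact div_nonneg (hτpos g).le (hθ' g).le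
        | exact (hτpos g).le
        | exact hθ g
        | exact hle
    · exact Finset.sum_le_sum hterm
  · intro τ0 τ1 hτ0 hτ1 hτs hηpos θ0 θ0' h0 h0' hlt
    obtain ⟨h0a, h0b⟩ := h0
    obtain ⟨h0'a, h0'b⟩ := h0'
    have h1 : (0:ℝ) < 1 - θ0' := by linarith
    have h2 : (0:ℝ) < 1 - θ0 := by linarith
    apply dbcd_frac_lt
    · exact mul_pos hτ0 (Real.rpow_pos_of_pos (div_pos hτ0 h0a) η)
    · exact mul_pos hτ1 (Real.rpow_pos_of_pos (div_pos hτ1 h2) η)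
    · exact mul_pos hτ0 (Real.rpow_pos_of_pos (div_pos hτ0 h0'a) η)
    · exact mul_pos hτ1 (Real.rpow_pos_of_pos (div_pos hτ1 h1) η)
    · have hbase : τ0 / θ0' < τ0 / θ0 := div_lt_div_of_pos_left hτ0 h0a hlt
      exact mul_lt_mul_of_pos_left
        (Real.rpow_lt_rpow (div_nonneg hτ0.le h0'a.le) hbase hηpos) hτ0
    · have hbase : τ1 / (1 - θ0) < τ1 / (1 - θ0') :=
        div_lt_div_of_pos_left hτ1 h1 (by linarith)
      exact mul_lt_mul_of_pos_left
        (Real.rpow_lt_rpow (div_nonneg hτ1.le h2.le) hbase hηpos) hτ1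
end
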